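/- arXiv:2209.11382 — 2 statements merged into one kernel-verified Lean document; each statement's English description precedes it below -/
import Mathlib

section
/- Let K ≥ 1 be an integer and R_1, …, R_K positive reals, with t_k := 2^{R_k} − 1, and let L be the K×K lower-triangular matrix with L_{kk} = 1/t_k, L_{kj} = −1 for k > j and L_{kj} = 0 for k < j. Define the K×K matrix B by B_{ij} = 0 for i < j, B_{ii} = t_i, and B_{ij} = t_i · t_j · Π_{l=j+1}^{i−1} 2^{R_l} for i > j. Then L · B = I; hence L is invertible with L^{−1} = B, and every entry of L^{−1} on or below the diagonal is strictly positive. -/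
/-!
Row `k` of `L` is `e_k / t_k` minus the indicator of `{m < k}`, so for `j < k` the entry
`(L B)_{kj}` is `B_{kj} / t_k - ∑_{j ≤ m < k} B_{mj}`. With `1 + t_l = 2 ^ R_l`, the column sum
telescopes: `1 + ∑_{j<m<k} t_m ∏_{j<l<m} (1 + t_l) = ∏_{j<l<k} (1 + t_l)` (expand the product
by the largest index contributing a factor `t`), which gives exactly `B_{kj} / t_k`.
Positivity of `B` on and below the diagonal is read off the formula, as `t > 0`.
-/

open Finset

section PowerAllocation

variable {ι 𝕜 : Type*} [LinearOrder ι] [Field 𝕜] (t : ι → 𝕜)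

def powerAllocMatrix : Matrix ι ι 𝕜 :=
  Matrix.of fun k j => if k = j then 1 / t k else if j < k then -1 else 0

theorem powerAllocMatrix_mul_apply [Fintype ι] [LocallyFiniteOrderBot ι] (M : Matrix ι ι 𝕜)
    (k j : ι) : (powerAllocMatrix t * M) k j = M k j / t k - ∑ m ∈ Iio k, M m j := by
  have hrow : ∀ m, powerAllocMatrix t k m * M m j
      = (if k = m then M k j / t k else 0) - if m < k then M m j else 0 := by
    intro m
    rcases lt_trichotomy m k with hmk | rfl | hkm
    · simp [powerAllocMatrix, hmk, hmk.ne']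
    · simp [powerAllocMatrix, div_eq_inv_mul]
    · simp [powerAllocMatrix, hkm.ne, hkm.not_gt]
  rw [Matrix.mul_apply, sum_congr rfl fun m _ => hrow m, sum_sub_distrib, sum_ite_eq,
    ← sum_filter, if_pos (mem_univ k)]
  congr 2
  ext m
  simp

variable [LocallyFiniteOrder ι]

theorem one_add_sum_mul_prod_Ioo_one_add {R : Type*} [CommSemiring R] (s : ι → R) (j k : ι) :
    1 + ∑ m ∈ Ioo j k, s m * ∏ l ∈ Ioo j m, (1 + s l) = ∏ l ∈ Ioo j k, (1 + s l) := by
  rw [prod_add_ordered, prod_const_one]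
  refine congrArg (1 + ·) (sum_congr rfl fun m hm => ?_)
  have hfilter : {l ∈ Ioo j k | l < m} = Ioo j m := by
    ext l
    simp only [mem_filter, mem_Ioo]
    constructor
    · rintro ⟨⟨hjl, -⟩, hlm⟩
      exact ⟨hjl, hlm⟩
    · rintro ⟨hjl, hlm⟩
      exact ⟨⟨hjl, hlm.trans (mem_Ioo.1 hm).2⟩, hlm⟩
  rw [hfilter, prod_const_one, mul_one]

def powerAllocInv : Matrix ι ι 𝕜 :=
  Matrix.of fun i j =>
    if i < j then 0 else if i = j then t i else t i * t j * ∏ l ∈ Ioo j i, (1 + t l)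

theorem powerAllocInv_pos {𝕂 : Type*} [Field 𝕂] [LinearOrder 𝕂] [IsStrictOrderedRing 𝕂]
    {t : ι → 𝕂} (ht : ∀ k, 0 < t k) {i j : ι} (hji : j ≤ i) : 0 < powerAllocInv t i j := by
  rcases hji.eq_or_lt with rfl | hji
  · simpa [powerAllocInv] using ht j
  · simp only [powerAllocInv, Matrix.of_apply, if_neg hji.not_gt, if_neg hji.ne']
    exact mul_pos (mul_pos (ht i) (ht j)) (prod_pos fun l _ => by linarith [ht l])

variable [LocallyFiniteOrderBot ι]

theorem sum_Iio_powerAllocInv_of_le {j k : ι} (hkj : k ≤ j) :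
    ∑ m ∈ Iio k, powerAllocInv t m j = 0 :=
  sum_eq_zero fun m hm => by simp [powerAllocInv, (mem_Iio.1 hm).trans_le hkj]

theorem sum_Iio_powerAllocInv_of_lt {j k : ι} (hjk : j < k) :
    ∑ m ∈ Iio k, powerAllocInv t m j = t j * ∏ l ∈ Ioo j k, (1 + t l) := by
  have hzero : ∀ m ∈ Iio k, m ∉ Ico j k → powerAllocInv t m j = 0 := by
    intro m hmk hm
    have hmj : m < j := by
      by_contra! hjm
      exact hm (mem_Ico.2 ⟨hjm, mem_Iio.1 hmk⟩)
    simp [powerAllocInv, hmj]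
  have hIoo : ∀ m ∈ Ioo j k, powerAllocInv t m j = t j * (t m * ∏ l ∈ Ioo j m, (1 + t l)) := by
    intro m hm
    have hjm := (mem_Ioo.1 hm).1
    simp only [powerAllocInv, Matrix.of_apply, if_neg hjm.not_gt, if_neg hjm.ne']
    ring
  rw [← sum_subset (fun m hm => mem_Iio.2 (mem_Ico.1 hm).2) hzero, ← Ioo_insert_left hjk,
    sum_insert left_notMem_Ioo, sum_congr rfl hIoo, ← mul_sum,
    ← one_add_sum_mul_prod_Ioo_one_add]
  simp [powerAllocInv, mul_add]

theorem powerAllocMatrix_mul_powerAllocInv [Fintype ι] (ht : ∀ k, t k ≠ 0) :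
    powerAllocMatrix t * powerAllocInv t = 1 := by
  ext k j
  rw [powerAllocMatrix_mul_apply]
  rcases lt_trichotomy j k with hjk | rfl | hkj
  · rw [sum_Iio_powerAllocInv_of_lt t hjk, Matrix.one_apply_ne hjk.ne']
    simp only [powerAllocInv, Matrix.of_apply, if_neg hjk.not_gt, if_neg hjk.ne']
    field_simp [ht k]
    ring
  · rw [sum_Iio_powerAllocInv_of_le t le_rfl]
    simp [powerAllocInv, ht j]
  · rw [sum_Iio_powerAllocInv_of_le t hkj.le]
    simp [powerAllocInv, hkj, hkj.ne]

end PowerAllocation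

theorem stmt_1_general
    (K : ℕ) (R : Fin K → ℝ) (hR : ∀ k, 0 < R k)
    (t : Fin K → ℝ) (ht : ∀ k, t k = (2 : ℝ) ^ (R k) - 1)
    (L : Matrix (Fin K) (Fin K) ℝ)
    (hL : ∀ k j : Fin K, L k j = if k = j then 1 / t k else if j < k then -1 else 0)
    (B : Matrix (Fin K) (Fin K) ℝ)
    (hB : ∀ i j : Fin K, B i j =
      if i < j then 0
      else if i = j then t i
      else t i * t j * ∏ l ∈ Finset.Ioo j i, (2 : ℝ) ^ (R l)) :
    L * B = 1 ∧ IsUnit L ∧ L⁻¹ = B ∧ ∀ i j : Fin K, j ≤ i → 0 < L⁻¹ i j := by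
  have htpos : ∀ k, 0 < t k := fun k => by
    rw [ht, sub_pos]
    exact Real.one_lt_rpow one_lt_two (hR k)
  have hpow : ∀ l, (2 : ℝ) ^ (R l) = 1 + t l := fun l => by rw [ht]; ring
  obtain rfl : L = powerAllocMatrix t := Matrix.ext hL
  obtain rfl : B = powerAllocInv t := Matrix.ext fun i j => by simp only [hB, hpow]; rfl
  have hmul := powerAllocMatrix_mul_powerAllocInv t fun k => (htpos k).ne'
  have hinv := Matrix.inv_eq_right_inv hmul
  refine ⟨hmul, (Matrix.isUnit_iff_isUnit_det _).2 (Matrix.isUnit_det_of_right_inverse hmul),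
    hinv, fun i j hji => ?_⟩
  rw [hinv]
  exact powerAllocInv_pos htpos hji

/-- Explicit inverse of the lower-triangular power-allocation matrix `L`
(equation (55) of Appendix F of the paper): `L·B = I`, so `L` is invertible
with `L⁻¹ = B`, and every entry of `L⁻¹` on or below the diagonal is
strictly positive. -/
theorem stmt_1
    (K : ℕ) (hK : 1 ≤ K) (R : Fin K → ℝ) (hR : ∀ k, 0 < R k)
    (t : Fin K → ℝ) (ht : ∀ k, t k = (2 : ℝ) ^ (R k) - 1)
    (L : Matrix (Fin K) (Fin K) ℝ)
    (hL : ∀ k j : Fin K, L k j = if k = j then 1 / t k else if j < k then -1 else 0)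
    (B : Matrix (Fin K) (Fin K) ℝ)
    (hB : ∀ i j : Fin K, B i j =
      if i < j then 0
      else if i = j then t i
      else t i * t j * ∏ l ∈ Finset.Ioo j i, (2 : ℝ) ^ (R l)) :
    L * B = 1 ∧ IsUnit L ∧ L⁻¹ = B ∧ ∀ i j : Fin K, j ≤ i → 0 < L⁻¹ i j :=
  stmt_1_general K R hR t ht L hL B hB
end

section
/- Let φ > 0, ζ > 0, S ≥ 0 be reals and n ≥ 1 an integer. Define ϱ(x) := ζ x^{n+1} (1 − φ x^{−n}) / (n φ ln(1 + ζ/(x + S))) and ℓ(x) := (x + S)(x + S + ζ) for x > 0. Then there exists x > φ^{1/n} such that ϱ(x) = ℓ(x). -/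
/-!
At `x₀ = φ^{1/n}` the factor `1 - φ x^{-n}` vanishes, so `ϱ(x₀) = 0 < ℓ(x₀)`. Since
`log (1 + t) ≤ t`, the denominator of `ϱ(x)` is at most `n φ ζ / (x + S)`, so once
`x^n ≥ 2φ` we get `ϱ(x) ≥ x^{n+1} (x + S) / (2 n φ)`, which for large `x` beats the
quadratic `ℓ(x)`. Both functions are continuous on `x > 0`, and the intermediate value
theorem gives the crossing point.
-/

open Filter Set

namespace OptimalRate

variable (φ ζ S : ℝ) (n : ℕ)

noncomputable def rho (x : ℝ) : ℝ :=
  ζ * x ^ (n + 1) * (1 - φ * x ^ (-(n : ℤ))) / ((n : ℝ) * φ * Real.log (1 + ζ / (x + S)))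

def ell (x : ℝ) : ℝ := (x + S) * (x + S + ζ)

variable {φ ζ S n}

lemma ell_pos {x : ℝ} (hx : 0 < x) (hζ : 0 ≤ ζ) (hS : 0 ≤ S) : 0 < ell ζ S x := by
  unfold ell
  positivity

lemma rho_eq_zero_of_pow_eq {x : ℝ} (hφ : φ ≠ 0) (hx : x ^ n = φ) : rho φ ζ S n x = 0 := by
  rw [rho, zpow_neg, zpow_natCast, hx, mul_inv_cancel₀ hφ, sub_self, mul_zero, zero_div]

lemma log_one_add_div_pos {x : ℝ} (hζ : 0 < ζ) (hxS : 0 < x + S) :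
    0 < Real.log (1 + ζ / (x + S)) :=
  Real.log_pos (lt_add_of_pos_right 1 (div_pos hζ hxS))

lemma continuousOn_rho (hφ : φ ≠ 0) (hζ : 0 < ζ) (hS : 0 ≤ S) (hn : n ≠ 0) :
    ContinuousOn (rho φ ζ S n) (Ioi 0) := by
  intro x (hx : 0 < x)
  have hxS : 0 < x + S := by linarith
  have hlog := log_one_add_div_pos hζ hxS
  refine ContinuousAt.continuousWithinAt (ContinuousAt.div ?_ ?_ (by positivity))
  · exact (continuousAt_const.mul (continuousAt_pow _ _)).mul
      (continuousAt_const.sub (continuousAt_const.mul (continuousAt_zpow₀ _ _ (Or.inl hx.ne'))))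
  · exact continuousAt_const.mul ((Real.continuousAt_log (by positivity)).comp
      (continuousAt_const.add (continuousAt_const.div (continuousAt_id.add continuousAt_const)
        hxS.ne')))

lemma continuous_ell : Continuous (ell ζ S) := by
  unfold ell
  fun_prop

lemma pow_succ_mul_div_le_rho {x : ℝ} (hφ : 0 < φ) (hζ : 0 < ζ) (hS : 0 ≤ S) (hn : n ≠ 0)
    (hx : 0 < x) (hxn : 2 * φ ≤ x ^ n) :
    x ^ (n + 1) * (x + S) / (2 * n * φ) ≤ rho φ ζ S n x := by
  have hxS : 0 < x + S := by linarith
  have hlog_pos := log_one_add_div_pos hζ hxS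
  have hlog_le : Real.log (1 + ζ / (x + S)) ≤ ζ / (x + S) := by
    linarith [Real.log_le_sub_one_of_pos (show 0 < 1 + ζ / (x + S) by positivity)]
  have hhalf : 1 / 2 ≤ 1 - φ * x ^ (-(n : ℤ)) := by
    have : φ / x ^ n ≤ 1 / 2 := by rw [div_le_iff₀ (by positivity)]; linarith
    rw [zpow_neg, zpow_natCast, ← div_eq_mul_inv]
    linarith
  calc x ^ (n + 1) * (x + S) / (2 * n * φ)
      = ζ * x ^ (n + 1) * (1 / 2) / (n * φ * (ζ / (x + S))) := by field_simp
    _ ≤ rho φ ζ S n x :=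
      div_le_div₀ (by positivity) (by gcongr) (by positivity) (by gcongr)

lemma eventually_ell_lt_rho (hφ : 0 < φ) (hζ : 0 < ζ) (hS : 0 ≤ S) (hn : n ≠ 0) :
    ∀ᶠ x in atTop, ell ζ S x < rho φ ζ S n x := by
  filter_upwards [eventually_ge_atTop 1, (tendsto_pow_atTop hn).eventually_ge_atTop (2 * φ),
    eventually_gt_atTop (2 * n * φ * (1 + S + ζ))] with x hx1 hxn hx_large
  have hx : 0 < x := by linarith
  have hnφ : 0 < 2 * n * φ := by positivity
  have hquad : 2 * n * φ * (x + S + ζ) < x ^ 2 := by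
    have : x + S + ζ ≤ x * (1 + S + ζ) := by nlinarith
    nlinarith [mul_le_mul_of_nonneg_left this hnφ.le]
  calc ell ζ S x < x ^ 2 * (x + S) / (2 * n * φ) := by
        rw [ell, lt_div_iff₀ hnφ]
        nlinarith [mul_lt_mul_of_pos_left hquad (show 0 < x + S by linarith)]
    _ ≤ x ^ (n + 1) * (x + S) / (2 * n * φ) := by
        gcongr
        omega
    _ ≤ rho φ ζ S n x := pow_succ_mul_div_le_rho hφ hζ hS hn hx hxn

end OptimalRate

open OptimalRate in
/-- Existence claim of Theorem 2 of the paper: the zero point `θ*` of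
`ϱ(x) − ℓ(x)` defining the optimal transmission rate exists, with
`θ* > φ^{1/n}`. -/
theorem stmt_6
    (φ ζ S : ℝ) (hφ : 0 < φ) (hζ : 0 < ζ) (hS : 0 ≤ S)
    (n : ℕ) (hn : 1 ≤ n)
    (ϱ ℓ : ℝ → ℝ)
    (hϱ : ∀ x : ℝ, ϱ x =
      ζ * x ^ (n + 1) * (1 - φ * x ^ (-(n : ℤ))) /
        ((n : ℝ) * φ * Real.log (1 + ζ / (x + S))))
    (hℓ : ∀ x : ℝ, ℓ x = (x + S) * (x + S + ζ)) :
    ∃ x : ℝ, φ ^ ((1 : ℝ) / (n : ℝ)) < x ∧ ϱ x = ℓ x := by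
  obtain rfl : ϱ = rho φ ζ S n := funext hϱ
  obtain rfl : ℓ = ell ζ S := funext hℓ
  have hn0 : n ≠ 0 := by omega
  set a := φ ^ ((1 : ℝ) / (n : ℝ)) with ha_def
  have ha : 0 < a := Real.rpow_pos_of_pos hφ _
  have hrho_a : rho φ ζ S n a = 0 :=
    rho_eq_zero_of_pow_eq hφ.ne' (by rw [ha_def, one_div, Real.rpow_inv_natCast_pow hφ.le hn0])
  obtain ⟨b, hab, hb⟩ :=
    ((eventually_ge_atTop a).and (eventually_ell_lt_rho hφ hζ hS hn0)).exists
  have hcont : ContinuousOn (fun x ↦ rho φ ζ S n x - ell ζ S x) (Icc a b) :=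
    ((continuousOn_rho hφ.ne' hζ hS hn0).sub continuous_ell.continuousOn).mono
      fun x hx ↦ ha.trans_le hx.1
  obtain ⟨x, hx, hx_root⟩ := intermediate_value_Ioo hab hcont
    ⟨by simpa [hrho_a] using ell_pos ha hζ.le hS, sub_pos.mpr hb⟩
  exact ⟨x, hx.1, sub_eq_zero.mp hx_root⟩
end
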